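/- arXiv:2411.08369 — 5 statements merged into one kernel-verified Lean document; each statement's English description precedes it below -/
import Mathlib

section
/- Let X be a Banach space, σ a Hausdorff locally convex topology on X for which the norm is lower semicontinuous, and (D_n) a bounded sequence in X with D_n → 0 in σ. Then for every finite-dimensional subspace Y ⊆ X, liminf_n dist(D_n, Y) ≥ (inf_n ‖D_n‖)/2. -/
/-!
Suppose `liminf dist(D n, Y) < r`. Along a subsequence pick `y_k ∈ Y` with `‖D n_k - y_k‖ < r`;
these are bounded, so by compactness of bounded sets in `Y` a further subsequence converges in
norm to some `y ∈ Y`. A linear map out of a finite-dimensional normed space is continuous into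
any topological vector space, so `y_k → y` also in `σ`, whence `D n_k - y_k → -y` in `σ`, and lower
semicontinuity of the norm gives `‖y‖ ≤ r`. Then `‖D n_k‖ ≤ r + ‖y_k‖ → r + ‖y‖ ≤ 2r`.
-/

open Filter Topology Metric Set Bornology

theorem exists_subseq_tendsto_of_frequently_infDist_lt {E : Type*} [PseudoMetricSpace E]
    {s : Set E} [ProperSpace s] (hs : s.Nonempty) {x : ℕ → E} (hx : IsBounded (range x))
    {r : ℝ} (hr : ∃ᶠ n in atTop, infDist (x n) s < r) :
    ∃ φ : ℕ → ℕ, StrictMono φ ∧ ∃ (g : ℕ → s) (y : s),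
      (∀ k, dist (x (φ k)) (g k) < r) ∧ Tendsto g atTop (𝓝 y) := by
  obtain ⟨φ, hφ, hφr⟩ := extraction_of_frequently_atTop hr
  have hnear (k : ℕ) : ∃ y : s, dist (x (φ k)) y < r := by
    obtain ⟨y, hy, hdist⟩ := (infDist_lt_iff hs).1 (hφr k)
    exact ⟨⟨y, hy⟩, hdist⟩
  choose g hg using hnear
  have hg_bdd (k : ℕ) : g k ∈ closedBall (g 0) (r + diam (range x) + r) :=
    calc dist (g k : E) (g 0)
        ≤ dist (g k : E) (x (φ k)) + dist (x (φ k)) (x (φ 0)) + dist (x (φ 0)) (g 0) :=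
          dist_triangle4 _ _ _ _
      _ ≤ r + diam (range x) + r := by
          gcongr
          · exact (dist_comm (g k : E) _ ▸ hg k).le
          · exact dist_le_diam_of_mem hx (mem_range_self _) (mem_range_self _)
          · exact (hg 0).le
  obtain ⟨y, -, ψ, hψ, hgψ⟩ := tendsto_subseq_of_bounded isBounded_closedBall hg_bdd
  exact ⟨φ ∘ ψ, hφ.comp hψ, g ∘ ψ, y, fun k => hg (ψ k), hgψ⟩

theorem norm_le_of_tendsto_of_frequently_norm_sub_le {X ι : Type*} [SeminormedAddCommGroup X]
    (t : TopologicalSpace X) (hsub : @ContinuousSub X t _)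
    (hlsc : @LowerSemicontinuous X ℝ t _ (fun x => ‖x‖))
    {l : Filter ι} [l.NeBot] {a b : ι → X} {b₀ : X}
    (ha : Tendsto a l (@nhds X t 0)) (hb : Tendsto b l (@nhds X t b₀))
    {r : ℝ} (hr : ∃ᶠ i in l, ‖a i - b i‖ ≤ r) : ‖b₀‖ ≤ r := by
  have hab : Tendsto (fun i => a i - b i) l (@nhds X t (-b₀)) := by
    simpa only [zero_sub] using ha.sub hb
  have := (hlsc.isClosed_preimage r).mem_of_frequently_of_tendsto hr hab
  rwa [mem_preimage, mem_Iic, norm_neg] at this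

theorem iInf_norm_le_two_mul_of_frequently_infDist_lt {X : Type*} [NormedAddCommGroup X]
    [NormedSpace ℝ X] (t : TopologicalSpace X) (htg : @IsTopologicalAddGroup X t _)
    (hsm : @ContinuousSMul ℝ X _ _ t) (hlsc : @LowerSemicontinuous X ℝ t _ (fun x => ‖x‖))
    {D : ℕ → X} (hbdd : IsBounded (range D)) (hconv : Tendsto D atTop (@nhds X t 0))
    (Y : Submodule ℝ X) [FiniteDimensional ℝ Y] {r : ℝ}
    (hr : ∃ᶠ n in atTop, infDist (D n) Y < r) :
    ⨅ n, ‖D n‖ ≤ 2 * r := by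
  have : ProperSpace (Y : Set X) := FiniteDimensional.proper_real Y
  obtain ⟨φ, hφ, g, y, hdist, hg⟩ :=
    exists_subseq_tendsto_of_frequently_infDist_lt ⟨0, Y.zero_mem⟩ hbdd hr
  -- `t` is a local instance, which would otherwise give `Y` its subspace topology.
  let : TopologicalSpace Y := UniformSpace.toTopologicalSpace
  have hgt : Tendsto (fun k => (g k : X)) atTop (@nhds X t y) :=
    (Y.subtype.continuous_of_finiteDimensional.tendsto y).comp hg
  have hy : ‖(y : X)‖ ≤ r :=
    norm_le_of_tendsto_of_frequently_norm_sub_le t inferInstance hlsc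
      (hconv.comp hφ.tendsto_atTop) hgt
      (Frequently.of_forall fun k => (dist_eq_norm (D (φ k)) (g k)) ▸ (hdist k).le)
  have hnorm : Tendsto (fun k => r + ‖(g k : X)‖) atTop (𝓝 (r + ‖(y : X)‖)) :=
    tendsto_const_nhds.add hg.norm
  have hle : ⨅ n, ‖D n‖ ≤ r + ‖(y : X)‖ := by
    refine ge_of_tendsto hnorm (Eventually.of_forall fun k => ?_)
    calc ⨅ n, ‖D n‖ ≤ ‖D (φ k)‖ := ciInf_le ⟨0, forall_mem_range.2 fun _ => norm_nonneg _⟩ _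
      _ ≤ dist (D (φ k)) (g k) + ‖(g k : X)‖ := by
          rw [dist_eq_norm]; exact norm_le_norm_sub_add _ _
      _ ≤ r + ‖(g k : X)‖ := by gcongr; exact (hdist k).le
  linarith

theorem liminf_infDist_ge_of_lsc_topology_general
    {X : Type*} [NormedAddCommGroup X] [NormedSpace ℝ X]
    (t : TopologicalSpace X)
    (htg : @IsTopologicalAddGroup X t _)
    (hsm : @ContinuousSMul ℝ X _ _ t)
    (hlsc : @LowerSemicontinuous X ℝ t _ (fun x => ‖x‖))
    (D : ℕ → X) (hbdd : ∃ C : ℝ, ∀ n, ‖D n‖ ≤ C)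
    (hconv : Filter.Tendsto D atTop (@nhds X t 0))
    (Y : Submodule ℝ X) (hY : FiniteDimensional ℝ Y) :
    (⨅ n, ‖D n‖) / 2 ≤ atTop.liminf (fun n => Metric.infDist (D n) (Y : Set X)) := by
  obtain ⟨C, hC⟩ := hbdd
  have hD_bdd : IsBounded (range D) := isBounded_iff_forall_norm_le.2 ⟨C, forall_mem_range.2 hC⟩
  have hdist_bdd : IsBoundedUnder (· ≤ ·) atTop fun n => infDist (D n) Y :=
    isBoundedUnder_of ⟨C, fun n =>
      (infDist_le_dist_of_mem Y.zero_mem).trans ((dist_zero_right (D n)).trans_le (hC n))⟩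
  by_contra! hlt
  obtain ⟨r, hlt_r, hr⟩ := exists_between hlt
  have := iInf_norm_le_two_mul_of_frequently_infDist_lt t htg hsm hlsc hD_bdd hconv Y
    (frequently_lt_of_liminf_lt hdist_bdd.isCoboundedUnder_ge hlt_r)
  linarith

/-- Let `X` be a Banach space, `t` a Hausdorff locally convex vector topology on `X` for
which the norm is lower semicontinuous, and `(D n)` a bounded sequence with `D n → 0`
in `t`. Then for every finite-dimensional subspace `Y ⊆ X`,
`liminf_n dist (D n) Y ≥ (⨅ n, ‖D n‖) / 2`. -/
theorem liminf_infDist_ge_of_lsc_topology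
    {X : Type*} [NormedAddCommGroup X] [NormedSpace ℝ X] [CompleteSpace X]
    (t : TopologicalSpace X)
    (ht2 : @T2Space X t)
    (htg : @IsTopologicalAddGroup X t _)
    (hsm : @ContinuousSMul ℝ X _ _ t)
    (hlc : @LocallyConvexSpace ℝ X _ _ _ _ t)
    (hlsc : @LowerSemicontinuous X ℝ t _ (fun x => ‖x‖))
    (D : ℕ → X) (hbdd : ∃ C : ℝ, ∀ n, ‖D n‖ ≤ C)
    (hconv : Filter.Tendsto D atTop (@nhds X t 0))
    (Y : Submodule ℝ X) (hY : FiniteDimensional ℝ Y) :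
    (⨅ n, ‖D n‖) / 2 ≤ atTop.liminf (fun n => Metric.infDist (D n) (Y : Set X)) :=
  liminf_infDist_ge_of_lsc_topology_general t htg hsm hlsc D hbdd hconv Y hY
end

section
/- Let X be a Banach space and (D_n) a bounded sequence in X converging to 0 in the weak topology σ(X, X*). Then for every finite-dimensional subspace Y ⊆ X, liminf_n dist(D_n, Y) ≥ (inf_n ‖D_n‖)/2. -/
/-!
If `infDist (D n) Y < r` along a subsequence, pick `y n ∈ Y` with `‖D n - y n‖ < r`; by finite
dimensionality a further subsequence of `y n` converges in norm to some `a`. Then `y n - D n`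
converges weakly to `a`, so `‖a‖ ≤ r` by weak lower semicontinuity of the norm, and
`‖D n‖ ≤ r + ‖y n‖ → r + ‖a‖ ≤ 2 r`.
-/

open Filter Topology Metric

section

variable {𝕜 X : Type*} [RCLike 𝕜] [NormedAddCommGroup X] [NormedSpace 𝕜 X]

theorem norm_le_of_forall_dual_tendsto {ι : Type*} {l : Filter ι} [l.NeBot] {x : ι → X}
    {a : X} {r : ℝ} (hx : ∀ φ : X →L[𝕜] 𝕜, Tendsto (fun n => φ (x n)) l (𝓝 (φ a)))
    (hr : ∀ᶠ n in l, ‖x n‖ ≤ r) : ‖a‖ ≤ r := by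
  obtain ⟨g, hg, hga⟩ := exists_dual_vector'' 𝕜 a
  have hlim : Tendsto (fun n => ‖g (x n)‖) l (𝓝 ‖a‖) := by
    simpa [hga] using (hx g).norm
  refine le_of_tendsto hlim (hr.mono fun n hn => ?_)
  calc ‖g (x n)‖ ≤ ‖g‖ * ‖x n‖ := g.le_opNorm _
    _ ≤ 1 * ‖x n‖ := by gcongr
    _ ≤ r := by rwa [one_mul]

theorem norm_le_of_weakly_null_of_dist_le {ι : Type*} {l : Filter ι} [l.NeBot] {x y : ι → X}
    {a : X} {r : ℝ} (hx : ∀ φ : X →L[𝕜] 𝕜, Tendsto (fun n => φ (x n)) l (𝓝 0))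
    (hy : Tendsto y l (𝓝 a)) (hr : ∀ᶠ n in l, dist (x n) (y n) ≤ r) : ‖a‖ ≤ r := by
  refine norm_le_of_forall_dual_tendsto (𝕜 := 𝕜) (l := l) (x := fun n => y n - x n)
    (fun φ => ?_) ?_
  · simpa using ((φ.continuous.tendsto a).comp hy).sub (hx φ)
  · exact hr.mono fun n hn => by rwa [dist_eq_norm'] at hn

theorem exists_subseq_dist_lt_of_frequently_infDist_lt
    (Y : Submodule 𝕜 X) [FiniteDimensional 𝕜 Y] {x : ℕ → X} {C r : ℝ} (hC : ∀ n, ‖x n‖ ≤ C)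
    (hfreq : ∃ᶠ n in atTop, infDist (x n) (Y : Set X) < r) :
    ∃ φ : ℕ → ℕ, StrictMono φ ∧ ∃ (y : ℕ → X) (a : X),
      (∀ k, dist (x (φ k)) (y k) < r) ∧ Tendsto y atTop (𝓝 a) := by
  obtain ⟨φ, hφ, hlt⟩ := extraction_of_frequently_atTop hfreq
  choose y hyY hy using fun k => (infDist_lt_iff ⟨0, Y.zero_mem⟩).1 (hlt k)
  have hK : IsCompact (((↑) : Y → X) '' closedBall 0 (C + r)) :=
    (isCompact_closedBall _ _).image continuous_subtype_val
  have hyK : ∀ k, y k ∈ ((↑) : Y → X) '' closedBall 0 (C + r) := fun k => by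
    refine ⟨⟨y k, hyY k⟩, ?_, rfl⟩
    rw [mem_closedBall, dist_zero_right, Submodule.coe_norm]
    calc ‖y k‖ ≤ ‖x (φ k)‖ + dist (x (φ k)) (y k) := by
          rw [dist_eq_norm']; exact norm_le_insert' _ _
      _ ≤ C + r := add_le_add (hC _) (hy k).le
  obtain ⟨a, -, ψ, hψ, hya⟩ := hK.tendsto_subseq hyK
  exact ⟨φ ∘ ψ, hφ.comp hψ, y ∘ ψ, a, fun k => hy (ψ k), hya⟩

end

theorem liminf_infDist_ge_of_weakly_null_general
    {X : Type*} [NormedAddCommGroup X] [NormedSpace ℝ X]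
    (D : ℕ → X) (hbdd : ∃ C : ℝ, ∀ n, ‖D n‖ ≤ C)
    (hweak : ∀ φ : X →L[ℝ] ℝ, Filter.Tendsto (fun n => φ (D n)) atTop (nhds 0))
    (Y : Submodule ℝ X) (hY : FiniteDimensional ℝ Y) :
    (⨅ n, ‖D n‖) / 2 ≤ atTop.liminf (fun n => Metric.infDist (D n) (Y : Set X)) := by
  obtain ⟨C, hC⟩ := hbdd
  -- without this bound the `liminf` of an unbounded sequence would be the junk value `0`
  have hcobdd : IsCoboundedUnder (· ≥ ·) atTop fun n => infDist (D n) (Y : Set X) :=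
    (isBoundedUnder_of ⟨C, fun n => (infDist_le_dist_of_mem Y.zero_mem).trans
      ((dist_zero_right (D n)).trans_le (hC n))⟩).isCoboundedUnder_ge
  refine le_of_forall_gt_imp_ge_of_dense fun r hr => ?_
  obtain ⟨φ, hφ, y, a, hdist, hya⟩ :=
    exists_subseq_dist_lt_of_frequently_infDist_lt Y hC (frequently_lt_of_liminf_lt hcobdd hr)
  have ha : ‖a‖ ≤ r := norm_le_of_weakly_null_of_dist_le (𝕜 := ℝ)
    (fun g => (hweak g).comp hφ.tendsto_atTop) hya (Eventually.of_forall fun k => (hdist k).le)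
  have hinf : ∀ k, ⨅ n, ‖D n‖ ≤ r + ‖y k‖ := fun k =>
    calc ⨅ n, ‖D n‖ ≤ ‖D (φ k)‖ := ciInf_le ⟨0, by rintro _ ⟨n, rfl⟩; positivity⟩ _
      _ ≤ ‖y k‖ + dist (D (φ k)) (y k) := by rw [dist_eq_norm]; exact norm_le_insert' _ _
      _ ≤ r + ‖y k‖ := by linarith [hdist k]
  linarith [ge_of_tendsto' (hya.norm.const_add r) hinf]

/-- Let `X` be a Banach space and `(D n)` a bounded sequence converging weakly to `0`.
Then for every finite-dimensional subspace `Y ⊆ X`,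
`liminf_n dist (D n) Y ≥ (⨅ n, ‖D n‖) / 2`. -/
theorem liminf_infDist_ge_of_weakly_null
    {X : Type*} [NormedAddCommGroup X] [NormedSpace ℝ X] [CompleteSpace X]
    (D : ℕ → X) (hbdd : ∃ C : ℝ, ∀ n, ‖D n‖ ≤ C)
    (hweak : ∀ φ : X →L[ℝ] ℝ, Filter.Tendsto (fun n => φ (D n)) atTop (nhds 0))
    (Y : Submodule ℝ X) (hY : FiniteDimensional ℝ Y) :
    (⨅ n, ‖D n‖) / 2 ≤ atTop.liminf (fun n => Metric.infDist (D n) (Y : Set X)) :=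
  liminf_infDist_ge_of_weakly_null_general D hbdd hweak Y hY
end

section
/- Let f : M → N be a Lipschitz map between metric spaces. If H¹(f∘γ(K)) = 0 for every bi-Lipschitz curve γ : K → M (K ⊆ ℝ compact), then H¹(f∘γ(K)) = 0 for every Lipschitz curve γ : K → M. -/
open MeasureTheory Filter Set Topology

/-- The 1-dimensional Hausdorff measure on a metric space (with the Borel σ-algebra). -/
noncomputable def H1 (P : Type*) [MetricSpace P] : @MeasureTheory.Measure P (borel P) :=
  @MeasureTheory.Measure.hausdorffMeasure P _ (borel P) (@BorelSpace.mk P _ (borel P) rfl) 1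

/-- A Lipschitz map `f : M → N` is curve-flat if for every compact `K ⊆ ℝ` and every
Lipschitz `γ : K → M`, the metric derivative of `f ∘ γ` vanishes Lebesgue-a.e. on `K`. -/
def CurveFlat {M N : Type*} [MetricSpace M] [MetricSpace N] (f : M → N) : Prop :=
  ∀ (K : Set ℝ), IsCompact K → ∀ (γ : ℝ → M) (C : NNReal), LipschitzOnWith C γ K →
    ∀ᵐ x ∂(volume.restrict K),
      Tendsto (fun y => dist (f (γ x)) (f (γ y)) / |x - y|) (nhdsWithin x (K \ {x})) (nhds 0)

/-- A metric space is purely 1-unrectifiable if every Lipschitz image in it of a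
subset of `ℝ` is `H¹`-null. -/
def PurelyOneUnrectifiable (P : Type*) [MetricSpace P] : Prop :=
  ∀ (A : Set ℝ) (γ : ℝ → P) (C : NNReal), LipschitzOnWith C γ A → H1 P (γ '' A) = 0

/-- `γ` is bi-Lipschitz on `K`: Lipschitz and with a Lipschitz inverse on its image. -/
def BiLipschitzOn {M : Type*} [MetricSpace M] (γ : ℝ → M) (K : Set ℝ) : Prop :=
  (∃ C : NNReal, LipschitzOnWith C γ K) ∧
  ∃ c : ℝ, 0 < c ∧ ∀ x ∈ K, ∀ y ∈ K, c * |x - y| ≤ dist (γ x) (γ y)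

/-!
Let `g = f ∘ γ`. Near the points of `K` where `γ` expands all small distances by a fixed factor,
short pieces of `γ` are bi-Lipschitz, and countably many such pieces suffice. At every other point
the lower metric derivative of `g` vanishes, and on such a set `B` the function
`ψ = complVolume B`, `ψ t = ∫₀ᵗ 1_{Bᶜ}`, controls `g`: for fixed `y`, a Lipschitz extension `u`
of `dist (g ·) (g y)` is differentiable a.e., hence `u' = 0` a.e. on `B`, and the fundamental
theorem of calculus gives `dist (g x) (g y) ≤ L |ψ y - ψ x|`. By Lebesgue's differentiation
theorem `ψ' = 0` a.e. on `B`, so `ψ(B)`, and with it `g(B)`, is null.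
-/

open scoped NNReal ENNReal

theorem hausdorffMeasure_image_le_of_dist_le_mul {α X Y : Type*} [MetricSpace X]
    [MeasurableSpace X] [BorelSpace X] [MetricSpace Y] [MeasurableSpace Y] [BorelSpace Y]
    {s : Set α} {g : α → X} {ψ : α → Y} {L : ℝ≥0}
    (hgψ : ∀ a ∈ s, ∀ b ∈ s, dist (g a) (g b) ≤ L * dist (ψ a) (ψ b)) {d : ℝ} (hd : 0 ≤ d) :
    μH[d] (g '' s) ≤ (L : ℝ≥0∞) ^ d * μH[d] (ψ '' s) := by
  rcases s.eq_empty_or_nonempty with rfl | ⟨a₀, ha₀⟩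
  · simp
  have : Nonempty α := ⟨a₀⟩
  set σ := Function.invFunOn ψ s
  have hσ : ∀ a ∈ s, σ (ψ a) ∈ s ∧ ψ (σ (ψ a)) = ψ a := fun a ha =>
    ⟨Function.invFunOn_mem ⟨a, ha, rfl⟩, Function.invFunOn_eq ⟨a, ha, rfl⟩⟩
  have hlip : LipschitzOnWith L (g ∘ σ) (ψ '' s) := by
    refine LipschitzOnWith.of_dist_le_mul ?_
    rintro _ ⟨a, ha, rfl⟩ _ ⟨b, hb, rfl⟩
    simpa only [Function.comp, (hσ a ha).2, (hσ b hb).2] using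
      hgψ _ (hσ a ha).1 _ (hσ b hb).1
  have himage : g '' s ⊆ (g ∘ σ) '' (ψ '' s) := by
    rintro _ ⟨a, ha, rfl⟩
    refine ⟨ψ a, mem_image_of_mem ψ ha, dist_le_zero.1 ?_⟩
    simpa only [Function.comp, (hσ a ha).2, dist_self, mul_zero] using hgψ _ (hσ a ha).1 a ha
  exact (measure_mono himage).trans (hlip.hausdorffMeasure_image_le hd)

theorem Real.volume_image_eq_zero_of_hasDerivWithinAt_zero {ψ : ℝ → ℝ} {s : Set ℝ}
    (hψ : ∀ x ∈ s, HasDerivWithinAt ψ 0 s x) : volume (ψ '' s) = 0 :=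
  addHaar_image_eq_zero_of_det_fderivWithin_eq_zero volume
    (f' := fun _ => (1 : ℝ →L[ℝ] ℝ).smulRight (0 : ℝ)) (fun x hx => (hψ x hx).hasFDerivWithinAt)
    (fun _ _ => by simp [ContinuousLinearMap.det])

noncomputable def complVolume (E : Set ℝ) (t : ℝ) : ℝ := ∫ s in (0 : ℝ)..t, Eᶜ.indicator 1 s

section complVolume

variable {E : Set ℝ}

theorem MeasurableSet.locallyIntegrable_indicator_compl_one (hE : MeasurableSet E) :
    LocallyIntegrable (Eᶜ.indicator (1 : ℝ → ℝ)) volume :=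
  (locallyIntegrable_const 1).indicator hE.compl

theorem MeasurableSet.intervalIntegrable_indicator_compl_one (hE : MeasurableSet E) (x y : ℝ) :
    IntervalIntegrable (Eᶜ.indicator (1 : ℝ → ℝ)) volume x y :=
  (hE.locallyIntegrable_indicator_compl_one.integrableOn_isCompact
    isCompact_uIcc).intervalIntegrable

theorem complVolume_sub_complVolume (hE : MeasurableSet E) (x y : ℝ) :
    complVolume E y - complVolume E x = ∫ s in x..y, Eᶜ.indicator 1 s :=
  intervalIntegral.integral_interval_sub_left
    (hE.intervalIntegrable_indicator_compl_one _ _) (hE.intervalIntegrable_indicator_compl_one _ _)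

theorem ae_hasDerivAt_complVolume (hE : MeasurableSet E) :
    ∀ᵐ x, x ∈ E → HasDerivAt (complVolume E) 0 x := by
  filter_upwards [_root_.LocallyIntegrable.ae_hasDerivAt_integral
    hE.locallyIntegrable_indicator_compl_one] with x hx hxE
  have hx0 := hx 0
  rwa [indicator_of_notMem (notMem_compl_iff.2 hxE)] at hx0

theorem LipschitzWith.abs_sub_le_mul_complVolume_sub {u : ℝ → ℝ} {L : ℝ≥0}
    (hu : LipschitzWith L u) (hE : MeasurableSet E) (hu0 : ∀ᵐ t, t ∈ E → HasDerivAt u 0 t)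
    {x y : ℝ} (hxy : x ≤ y) :
    |u y - u x| ≤ L * (complVolume E y - complVolume E x) := by
  have hbound : ∀ᵐ t, t ∈ Ioc x y → ‖deriv u t‖ ≤ (L : ℝ) * Eᶜ.indicator 1 t := by
    filter_upwards [hu0] with t ht _
    by_cases htE : t ∈ E
    · simp [(ht htE).deriv, htE]
    · simpa [htE] using norm_deriv_le_of_lipschitz hu
  calc |u y - u x| = ‖∫ t in x..y, deriv u t‖ := by
        rw [(hu.lipschitzOnWith.absolutelyContinuousOnInterval).integral_deriv_eq_sub,
          Real.norm_eq_abs]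
    _ ≤ ∫ t in x..y, (L : ℝ) * Eᶜ.indicator 1 t :=
        intervalIntegral.norm_integral_le_of_norm_le hxy hbound
          ((hE.intervalIntegrable_indicator_compl_one _ _).const_mul _)
    _ = L * (complVolume E y - complVolume E x) := by
        rw [intervalIntegral.integral_const_mul, complVolume_sub_complVolume hE]

end complVolume

def HasZeroLowerMetricDerivWithin {X : Type*} [MetricSpace X] (g : ℝ → X) (K : Set ℝ) (x : ℝ) :
    Prop :=
  ∀ ε > 0, ∃ᶠ y in 𝓝[K \ {x}] x, dist (g y) (g x) ≤ ε * |y - x|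

namespace HasZeroLowerMetricDerivWithin

variable {X Y : Type*} [MetricSpace X] [MetricSpace Y] {g : ℝ → X} {K : Set ℝ} {x : ℝ}

theorem of_dist_le_mul (h : HasZeroLowerMetricDerivWithin g K x) {v : ℝ → Y} (C : ℝ≥0)
    (hvg : ∀ y ∈ K, dist (v y) (v x) ≤ C * dist (g y) (g x)) :
    HasZeroLowerMetricDerivWithin v K x := by
  intro ε hε
  have hC : (0 : ℝ) < C + 1 := by positivity
  refine ((h (ε / (C + 1)) (div_pos hε hC)).and_eventually self_mem_nhdsWithin).mono ?_
  rintro y ⟨hy, hyK, -⟩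
  calc dist (v y) (v x) ≤ C * dist (g y) (g x) := hvg y hyK
    _ ≤ C * (ε / (C + 1) * |y - x|) := by gcongr
    _ ≤ ε * |y - x| := by
        rw [← mul_assoc, mul_div_assoc']
        gcongr
        rw [div_le_iff₀ hC]
        nlinarith [C.coe_nonneg]

theorem eq_zero_of_hasDerivAt {u : ℝ → ℝ} (h : HasZeroLowerMetricDerivWithin u K x) {u' : ℝ}
    (hu : HasDerivAt u u' x) : u' = 0 := by
  have hslope : Tendsto (fun y => |slope u x y|) (𝓝[K \ {x}] x) (𝓝 |u'|) :=
    (hasDerivWithinAt_iff_tendsto_slope.1 hu.hasDerivWithinAt).abs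
  refine abs_eq_zero.1 (le_antisymm (le_of_forall_pos_le_add fun ε hε => ?_) (abs_nonneg _))
  rw [zero_add]
  refine le_of_tendsto_of_frequently hslope (((h ε hε).and_eventually self_mem_nhdsWithin).mono ?_)
  rintro y ⟨hy, -, hyx⟩
  have hpos : 0 < |y - x| := abs_pos.2 (sub_ne_zero.2 hyx)
  rw [slope_def_field, abs_div, div_le_iff₀ hpos, ← Real.dist_eq]
  exact hy

end HasZeroLowerMetricDerivWithin

section ZeroLowerMetricDeriv

variable {X : Type*} [MetricSpace X] {g : ℝ → X} {K B : Set ℝ} {L : ℝ≥0}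

theorem LipschitzOnWith.dist_le_mul_dist_complVolume (hg : LipschitzOnWith L g K)
    (hB : MeasurableSet B) (hBK : B ⊆ K) (hflat : ∀ x ∈ B, HasZeroLowerMetricDerivWithin g K x)
    {x y : ℝ} (hx : x ∈ K) (hy : y ∈ K) :
    dist (g x) (g y) ≤ L * dist (complVolume B x) (complVolume B y) := by
  wlog hxy : x ≤ y generalizing x y
  · rw [dist_comm, dist_comm (complVolume B x)]
    exact this hy hx (le_of_not_ge hxy)
  have hdist : LipschitzOnWith L (fun t => dist (g t) (g y)) K := by
    have := (LipschitzWith.dist_left (g y)).comp_lipschitzOnWith hg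
    rwa [one_mul] at this
  obtain ⟨u, hu, hgu⟩ := hdist.extend_real
  have hu0 : ∀ᵐ t, t ∈ B → HasDerivAt u 0 t := by
    filter_upwards [hu.ae_differentiableAt] with t ht htB
    have hflat_u : HasZeroLowerMetricDerivWithin u K t := (hflat t htB).of_dist_le_mul 1
      fun s hs => by
        rw [← hgu hs, ← hgu (hBK htB), NNReal.coe_one, one_mul, Real.dist_eq]
        exact abs_dist_sub_le _ _ _
    exact hflat_u.eq_zero_of_hasDerivAt ht.hasDerivAt ▸ ht.hasDerivAt
  calc dist (g x) (g y) = |u y - u x| := by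
        rw [← hgu hx, ← hgu hy]
        dsimp only
        rw [dist_self, zero_sub, abs_neg, abs_of_nonneg dist_nonneg]
    _ ≤ L * (complVolume B y - complVolume B x) := hu.abs_sub_le_mul_complVolume_sub hB hu0 hxy
    _ ≤ L * dist (complVolume B x) (complVolume B y) := by
        rw [dist_comm, Real.dist_eq]
        gcongr
        exact le_abs_self _

theorem LipschitzOnWith.hausdorffMeasure_image_eq_zero_of_hasZeroLowerMetricDerivWithin
    [MeasurableSpace X] [BorelSpace X] (hg : LipschitzOnWith L g K) (hB : MeasurableSet B)
    (hBK : B ⊆ K) (hflat : ∀ x ∈ B, HasZeroLowerMetricDerivWithin g K x) :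
    μH[1] (g '' B) = 0 := by
  set S := {x ∈ B | HasDerivAt (complVolume B) 0 x}
  have hBS : volume (B \ S) = 0 := by
    refine measure_mono_null ?_ (ae_iff.1 (ae_hasDerivAt_complVolume hB))
    rintro x ⟨hxB, hxS⟩ h
    exact hxS ⟨hxB, h hxB⟩
  have hgS : μH[1] (g '' S) = 0 := by
    have hψS : volume (complVolume B '' S) = 0 :=
      Real.volume_image_eq_zero_of_hasDerivWithinAt_zero fun x hx => hx.2.hasDerivWithinAt
    have hdom : ∀ a ∈ S, ∀ b ∈ S,
        dist (g a) (g b) ≤ L * dist (complVolume B a) (complVolume B b) := fun a ha b hb =>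
      hg.dist_le_mul_dist_complVolume hB hBK hflat (hBK ha.1) (hBK hb.1)
    simpa [hausdorffMeasure_real, hψS] using
      hausdorffMeasure_image_le_of_dist_le_mul hdom zero_le_one
  have hgBS : μH[1] (g '' (B \ S)) = 0 := by
    have := (hg.mono (sdiff_subset.trans hBK : B \ S ⊆ K)).hausdorffMeasure_image_le zero_le_one
    rwa [hausdorffMeasure_real, hBS, mul_zero, nonpos_iff_eq_zero] at this
  rw [← union_sdiff_cancel (sep_subset B _ : S ⊆ B), image_union]
  exact measure_union_null hgS hgBS

end ZeroLowerMetricDeriv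

def expandingSet {M : Type*} [MetricSpace M] (γ : ℝ → M) (K : Set ℝ) (n : ℕ) : Set ℝ :=
  {x ∈ K | ∀ y ∈ K, |x - y| < (n + 1 : ℝ)⁻¹ → (n + 1 : ℝ)⁻¹ * |x - y| ≤ dist (γ x) (γ y)}

section expandingSet

variable {M : Type*} [MetricSpace M] {γ : ℝ → M} {K : Set ℝ}

theorem isClosed_expandingSet (hK : IsClosed K) (hγ : ContinuousOn γ K) (n : ℕ) :
    IsClosed (expandingSet γ K n) := by
  refine isClosed_of_closure_subset fun x hx => ?_
  have hxK : x ∈ K := closure_minimal (sep_subset K _) hK hx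
  refine ⟨hxK, fun y hy hxy => ?_⟩
  have : (𝓝[expandingSet γ K n] x).NeBot := mem_closure_iff_nhdsWithin_neBot.1 hx
  have hlim₁ : Tendsto (fun x' => |x' - y|) (𝓝[expandingSet γ K n] x) (𝓝 |x - y|) :=
    ((continuous_id.sub continuous_const).abs.tendsto x).mono_left nhdsWithin_le_nhds
  have hlim₂ : Tendsto (fun x' => dist (γ x') (γ y)) (𝓝[expandingSet γ K n] x)
      (𝓝 (dist (γ x) (γ y))) :=
    ((hγ x hxK).mono (sep_subset K _)).tendsto.dist tendsto_const_nhds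
  refine le_of_tendsto_of_tendsto (hlim₁.const_mul _) hlim₂ ?_
  filter_upwards [hlim₁.eventually (gt_mem_nhds hxy), self_mem_nhdsWithin] with x' hx' hx'A
  exact hx'A.2 y hy hx'

theorem biLipschitzOn_expandingSet_inter_Icc {C : ℝ≥0} (hγ : LipschitzOnWith C γ K) (n : ℕ)
    {a b : ℝ} (hab : b - a < (n + 1 : ℝ)⁻¹) : BiLipschitzOn γ (expandingSet γ K n ∩ Icc a b) :=
  ⟨⟨C, hγ.mono (inter_subset_left.trans (sep_subset K _))⟩, (n + 1 : ℝ)⁻¹, by positivity,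
    fun _ hx y hy => hx.1.2 y hy.1.1 ((Real.dist_le_of_mem_Icc hx.2 hy.2).trans_lt hab)⟩

theorem hasZeroLowerMetricDerivWithin_of_notMem_iUnion_expandingSet {x : ℝ} (hx : x ∈ K)
    (hxA : x ∉ ⋃ n, expandingSet γ K n) : HasZeroLowerMetricDerivWithin γ K x := by
  intro ε hε
  rw [(Metric.nhdsWithin_basis_ball).frequently_iff]
  intro δ hδ
  obtain ⟨n, hn⟩ := exists_nat_one_div_lt (lt_min hδ hε)
  rw [one_div] at hn
  have hxn : x ∉ expandingSet γ K n := fun h => hxA (mem_iUnion.2 ⟨n, h⟩)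
  simp only [expandingSet, mem_ofPred_eq, hx, true_and, not_forall, not_le] at hxn
  obtain ⟨y, hyK, hxy, hγxy⟩ := hxn
  have hyx : y ≠ x := by
    rintro rfl
    simp at hγxy
  refine ⟨y, ⟨?_, hyK, hyx⟩, ?_⟩
  · rw [Metric.mem_ball, Real.dist_eq, abs_sub_comm]
    exact hxy.trans (hn.trans_le (min_le_left _ _))
  · rw [dist_comm, abs_sub_comm]
    exact hγxy.le.trans (mul_le_mul_of_nonneg_right (hn.le.trans (min_le_right _ _))
      (abs_nonneg _))

end expandingSet

/-- If the image under `f` of every bi-Lipschitz curve is `H¹`-null, then the image under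
`f` of every Lipschitz curve is `H¹`-null. -/
theorem hausdorff_null_of_biLipschitz_null {M N : Type*} [MetricSpace M] [MetricSpace N]
    (f : M → N) (Lf : NNReal) (hf : LipschitzWith Lf f)
    (hbi : ∀ (K : Set ℝ), IsCompact K → ∀ (γ : ℝ → M), BiLipschitzOn γ K →
      H1 N (f '' (γ '' K)) = 0) :
    ∀ (K : Set ℝ), IsCompact K → ∀ (γ : ℝ → M) (C : NNReal), LipschitzOnWith C γ K →
      H1 N (f '' (γ '' K)) = 0 := by
  intro K hK γ C hγ
  let : MeasurableSpace N := borel N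
  have : BorelSpace N := ⟨rfl⟩
  change μH[1] (f '' (γ '' K)) = 0
  set A := expandingSet γ K
  set I : ℕ → ℤ → Set ℝ := fun n j => Icc (j • (n + 2 : ℝ)⁻¹) ((j + 1) • (n + 2 : ℝ)⁻¹)
  have hA : ∀ n, IsClosed (A n) := isClosed_expandingSet hK.isClosed hγ.continuousOn
  have hI : ∀ n, ⋃ j, I n j = univ := fun n => iUnion_Icc_zsmul (by positivity)
  have hcover : K = (K \ ⋃ n, A n) ∪ ⋃ n, ⋃ j, A n ∩ I n j := by
    simp_rw [← inter_iUnion, hI, inter_univ]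
    exact (sdiff_union_of_subset (iUnion_subset fun n => sep_subset K _)).symm
  have hpiece : ∀ n j, μH[1] (f '' (γ '' (A n ∩ I n j))) = 0 := fun n j =>
    hbi _ (hK.of_isClosed_subset ((hA n).inter isClosed_Icc)
      (inter_subset_left.trans (sep_subset K _))) γ
      (biLipschitzOn_expandingSet_inter_Icc hγ n (by
        rw [add_smul, one_smul, add_sub_cancel_left]
        gcongr
        norm_num))
  have hflat : μH[1] (f '' (γ '' (K \ ⋃ n, A n))) = 0 := by
    rw [image_image]
    refine LipschitzOnWith.hausdorffMeasure_image_eq_zero_of_hasZeroLowerMetricDerivWithin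
      (hf.comp_lipschitzOnWith hγ)
      (hK.isClosed.measurableSet.diff (.iUnion fun n => (hA n).measurableSet)) sdiff_subset
      fun x hx => ?_
    exact (hasZeroLowerMetricDerivWithin_of_notMem_iUnion_expandingSet hx.1 hx.2).of_dist_le_mul
      Lf fun y _ => hf.dist_le_mul _ _
  rw [hcover, image_union, image_union, image_iUnion₂, image_iUnion₂]
  exact measure_union_null hflat (measure_iUnion_null fun n => measure_iUnion_null (hpiece n))
end

section
/- Let f : M → N be a Lipschitz map between metric spaces. Then f is curve-flat if and only if for every Lipschitz curve γ : K → M (K ⊆ ℝ compact) and every Lipschitz function g : N → ℝ, the Lebesgue measure of (g∘f∘γ)(K) ⊆ ℝ is zero. -/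
open MeasureTheory Filter Set Topology

/-!
If `f` is curve-flat, then `g ∘ f ∘ γ` has derivative zero within `K` at almost every point of
`K`; the area formula makes the image of these points null, and the remaining null set has a null
Lipschitz image.

Conversely, a real function with null image has derivative zero almost everywhere on the set:
where the derivative does not vanish the function is locally expanding, and an expanding piece
of a set with null image is itself null. Applied to a McShane extension of
`r ↦ dist (f (γ r)) (f (γ t))` and integrated, this gives
`dist (f (γ s)) (f (γ t)) ≤ L · |[s, t] \ K|` for `s, t ∈ K`, with `L` a Lipschitz constant of
`f ∘ γ` on `K`; this is `o(|s - t|)` at every Lebesgue density point `t` of `K`.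
-/

open scoped NNReal Interval

section HausdorffNull

variable {X Y : Type*} [MetricSpace X] [MetricSpace Y] [MeasurableSpace X] [BorelSpace X]
  [MeasurableSpace Y] [BorelSpace Y] {d : ℝ} {f : X → Y} {s : Set X}

lemma hausdorffMeasure_eq_zero_of_antilipschitzWith_domRestrict {K : ℝ≥0} (hd : 0 ≤ d)
    (hf : AntilipschitzWith K (s.domRestrict f)) (h : μH[d] (f '' s) = 0) : μH[d] s = 0 := by
  have := hf.le_hausdorffMeasure_image hd univ
  rwa [image_univ, range_domRestrict, h, mul_zero, nonpos_iff_eq_zero,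
    ← isometry_subtype_coe.hausdorffMeasure_image (Or.inl hd), image_univ,
    Subtype.range_coe] at this

lemma hausdorffMeasure_eq_zero_of_locally_expanding [SecondCountableTopology X] (hd : 0 ≤ d)
    (hexp : ∀ x ∈ s, ∃ C : ℝ, ∀ᶠ y in 𝓝 x, dist y x ≤ C * dist (f y) (f x))
    (h : μH[d] (f '' s) = 0) : μH[d] s = 0 := by
  set t : ℕ → Set X := fun n =>
    {x ∈ s | ∀ y, dist y x < (n + 1 : ℝ)⁻¹ → dist y x ≤ n * dist (f y) (f x)}
  have hcover : s ⊆ ⋃ n, t n := by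
    intro x hx
    obtain ⟨C, hC⟩ := hexp x hx
    obtain ⟨ε, hε, hball⟩ := Metric.eventually_nhds_iff.1 hC
    obtain ⟨n, hn⟩ := exists_nat_ge (max C ε⁻¹)
    have hnε : (n + 1 : ℝ)⁻¹ < ε :=
      inv_lt_of_inv_lt₀ hε (by linarith [le_of_max_le_right hn])
    refine mem_iUnion.2 ⟨n, hx, fun y hy => (hball (hy.trans hnε)).trans ?_⟩
    exact mul_le_mul_of_nonneg_right (le_of_max_le_left hn) dist_nonneg
  refine measure_mono_null hcover (measure_iUnion_null fun n => ?_)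
  refine measure_null_of_locally_null _ fun x _ => ?_
  set u := t n ∩ Metric.ball x ((n + 1 : ℝ)⁻¹ / 2)
  refine ⟨u, inter_mem_nhdsWithin _ (Metric.ball_mem_nhds _ (by positivity)), ?_⟩
  refine hausdorffMeasure_eq_zero_of_antilipschitzWith_domRestrict (K := n) hd ?_
    (measure_mono_null (image_mono fun y hy => hy.1.1) h)
  refine AntilipschitzWith.of_le_mul_dist fun a b => ?_
  have hab : dist (b : X) a < (n + 1 : ℝ)⁻¹ := by
    have := dist_triangle_right (b : X) a x
    linarith [Metric.mem_ball.1 a.2.2, Metric.mem_ball.1 b.2.2]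
  simpa [Subtype.dist_eq, dist_comm] using a.2.1.2 b hab

end HausdorffNull

lemma volume_setOf_deriv_ne_zero_of_volume_image_eq_zero {H : ℝ → ℝ} {s : Set ℝ}
    (h : volume (H '' s) = 0) :
    volume {x ∈ s | deriv H x ≠ 0} = 0 := by
  rw [← hausdorffMeasure_real] at h ⊢
  refine hausdorffMeasure_eq_zero_of_locally_expanding zero_le_one (fun x hx => ?_)
    (measure_mono_null (image_mono fun y hy => hy.1) h)
  have hH := (differentiableAt_of_deriv_ne_zero hx.2).hasDerivAt
  obtain ⟨C, hC⟩ := ((hH.isTheta_sub hx.2).isBigO_symm.comp_tendsto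
    (tendsto_id.prodMk tendsto_const_pure)).bound
  exact ⟨C, by simpa only [dist_eq_norm, Function.comp_apply, id] using hC⟩

lemma LipschitzOnWith.volume_image_eq_zero {h : ℝ → ℝ} {s : Set ℝ} {L : ℝ≥0}
    (hh : LipschitzOnWith L h s) (hs : volume s = 0) : volume (h '' s) = 0 := by
  have := hh.hausdorffMeasure_image_le zero_le_one
  rw [hausdorffMeasure_real, hs, mul_zero, nonpos_iff_eq_zero] at this
  exact this

lemma LipschitzWith.hasDerivWithinAt_comp_zero_of_tendsto_dist_div {N : Type*} [MetricSpace N]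
    {F : ℝ → N} {g : N → ℝ} {Cg : ℝ≥0} (hg : LipschitzWith Cg g) {K : Set ℝ} {x : ℝ}
    (h : Tendsto (fun y => dist (F x) (F y) / |x - y|) (𝓝[K \ {x}] x) (𝓝 0)) :
    HasDerivWithinAt (g ∘ F) 0 K x := by
  rw [hasDerivWithinAt_iff_tendsto_slope]
  have hlim := h.const_mul (Cg : ℝ)
  rw [mul_zero] at hlim
  refine squeeze_zero_norm' (Eventually.of_forall fun y => ?_) hlim
  calc ‖slope (g ∘ F) x y‖ = |g (F y) - g (F x)| / |x - y| := by
        rw [slope_def_field, norm_div, Real.norm_eq_abs, Real.norm_eq_abs, abs_sub_comm y x]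
        rfl
    _ ≤ Cg * dist (F x) (F y) / |x - y| := by
        gcongr
        rw [← Real.dist_eq, dist_comm]
        exact hg.dist_le_mul _ _
    _ = Cg * (dist (F x) (F y) / |x - y|) := mul_div_assoc ..

lemma LipschitzOnWith.volume_image_eq_zero_of_ae_hasDerivWithinAt_zero {h : ℝ → ℝ}
    {K : Set ℝ} {L : ℝ≥0} (hK : MeasurableSet K) (hh : LipschitzOnWith L h K)
    (hderiv : ∀ᵐ x ∂volume.restrict K, HasDerivWithinAt h 0 K x) : volume (h '' K) = 0 := by
  set A := {x ∈ K | HasDerivWithinAt h 0 K x}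
  have hA : volume (h '' A) = 0 := by
    refine addHaar_image_eq_zero_of_det_fderivWithin_eq_zero volume (f' := fun _ => 0)
      (fun x hx => ?_) (fun _ _ => by simp)
    simpa using hx.2.hasFDerivWithinAt.mono (sep_subset K _)
  have hKA : volume (K \ A) = 0 := by
    rw [ae_restrict_iff' hK] at hderiv
    refine measure_mono_null (fun x hx => ?_) (ae_iff.1 hderiv)
    exact fun hP => hx.2 ⟨hx.1, hP hx.1⟩
  have hKA' := (hh.mono sdiff_subset).volume_image_eq_zero hKA
  rw [← union_sdiff_cancel (sep_subset K _), image_union]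
  exact measure_union_null hA hKA'

lemma LipschitzOnWith.abs_sub_le_of_volume_image_eq_zero {h : ℝ → ℝ} {K : Set ℝ}
    {L : ℝ≥0} (hh : LipschitzOnWith L h K) (himg : volume (h '' K) = 0) {s t : ℝ}
    (hs : s ∈ K) (ht : t ∈ K) : |h s - h t| ≤ L * volume.real (Ι s t \ K) := by
  obtain ⟨Φ, hΦ, hΦh⟩ := hh.extend_real
  have hderiv : ∀ᵐ x, x ∈ Ι s t \ (Ι s t \ K) → deriv Φ x = 0 := by
    rw [Set.sdiff_sdiff_right_self]
    refine measure_mono_null (fun x hx => ?_)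
      (volume_setOf_deriv_ne_zero_of_volume_image_eq_zero (hΦh.image_eq ▸ himg))
    obtain ⟨hxK, hne⟩ := Classical.not_imp.1 hx
    exact ⟨hxK.2, hne⟩
  calc |h s - h t| = ‖∫ x in s..t, deriv Φ x‖ := by
        rw [(hΦ.lipschitzOnWith.absolutelyContinuousOnInterval).integral_deriv_eq_sub,
          hΦh hs, hΦh ht, Real.norm_eq_abs, abs_sub_comm]
    _ = ‖∫ x in Ι s t \ K, deriv Φ x‖ := by
        rw [intervalIntegral.norm_integral_eq_norm_integral_uIoc,
          setIntegral_eq_of_subset_of_ae_sdiff_eq_zero measurableSet_uIoc.nullMeasurableSet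
            sdiff_subset hderiv]
    _ ≤ L * volume.real (Ι s t \ K) :=
        norm_setIntegral_le_of_norm_le_const
          ((measure_mono sdiff_subset).trans_lt (by simp [Real.volume_uIoc]))
          fun x _ => norm_deriv_le_of_lipschitz hΦ

lemma LipschitzOnWith.dist_le_of_volume_image_dist_eq_zero {N : Type*} [MetricSpace N]
    {F : ℝ → N} {K : Set ℝ} {L : ℝ≥0} (hF : LipschitzOnWith L F K)
    (himg : ∀ z, volume ((fun r => dist (F r) z) '' K) = 0) {s t : ℝ} (hs : s ∈ K)
    (ht : t ∈ K) : dist (F s) (F t) ≤ L * volume.real (Ι s t \ K) := by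
  have hdist : LipschitzOnWith (1 * L) (fun r => dist (F r) (F t)) K :=
    (LipschitzWith.dist_left (F t)).comp_lipschitzOnWith hF
  rw [one_mul] at hdist
  simpa using hdist.abs_sub_le_of_volume_image_eq_zero (himg (F t)) hs ht

lemma ae_tendsto_volume_closedBall_sdiff_div {K : Set ℝ} (hK : MeasurableSet K) :
    ∀ᵐ x ∂volume.restrict K,
      Tendsto (fun r => volume.real (Metric.closedBall x r \ K) / r) (𝓝[>] 0) (𝓝 0) := by
  filter_upwards [ae_restrict_of_ae
      (Besicovitch.ae_tendsto_measure_inter_div_of_measurableSet volume hK.compl),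
    ae_restrict_mem hK] with x hx hxK
  rw [indicator_of_notMem (not_not_intro hxK)] at hx
  have hreal := ((ENNReal.tendsto_toReal ENNReal.zero_ne_top).comp hx).const_mul 2
  rw [ENNReal.toReal_zero, mul_zero] at hreal
  refine hreal.congr' ?_
  filter_upwards [self_mem_nhdsWithin] with r (hr : 0 < r)
  rw [Function.comp_apply, ENNReal.toReal_div, Real.volume_closedBall,
    ENNReal.toReal_ofReal (by positivity), inter_comm, ← sdiff_eq]
  field_simp
  rfl

lemma LipschitzOnWith.ae_tendsto_dist_div_of_volume_image_dist_eq_zero {N : Type*}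
    [MetricSpace N] {F : ℝ → N} {K : Set ℝ} {L : ℝ≥0} (hK : MeasurableSet K)
    (hF : LipschitzOnWith L F K) (himg : ∀ z, volume ((fun r => dist (F r) z) '' K) = 0) :
    ∀ᵐ x ∂volume.restrict K,
      Tendsto (fun y => dist (F x) (F y) / |x - y|) (𝓝[K \ {x}] x) (𝓝 0) := by
  filter_upwards [ae_tendsto_volume_closedBall_sdiff_div hK, ae_restrict_mem hK] with x hx hxK
  have habs : Tendsto (fun y => |x - y|) (𝓝[K \ {x}] x) (𝓝[>] 0) := by
    refine tendsto_nhdsWithin_iff.2 ⟨?_, ?_⟩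
    · exact ((continuous_const.sub continuous_id).abs.tendsto' x 0 (by simp)).mono_left
        nhdsWithin_le_nhds
    · filter_upwards [self_mem_nhdsWithin] with y hy
      exact abs_pos.2 (sub_ne_zero.2 (Ne.symm hy.2))
  have hlim := (hx.comp habs).const_mul (L : ℝ)
  rw [mul_zero] at hlim
  refine squeeze_zero' (Eventually.of_forall fun y => by positivity) ?_ hlim
  filter_upwards [self_mem_nhdsWithin] with y ⟨hyK, _⟩
  have hsub : Ι x y ⊆ Metric.closedBall x |x - y| := fun r hr => by
    rw [Metric.mem_closedBall, Real.dist_eq, abs_sub_comm x y]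
    exact abs_sub_left_of_mem_uIcc (uIoc_subset_uIcc hr)
  calc dist (F x) (F y) / |x - y| ≤ L * volume.real (Ι x y \ K) / |x - y| := by
        gcongr
        exact hF.dist_le_of_volume_image_dist_eq_zero himg hxK hyK
    _ ≤ L * (volume.real (Metric.closedBall x |x - y| \ K) / |x - y|) := by
        rw [mul_div_assoc]
        gcongr
        exact ((measure_mono sdiff_subset).trans_lt measure_closedBall_lt_top).ne

/-- `f` is curve-flat iff for every Lipschitz curve `γ : K → M` and every Lipschitz
`g : N → ℝ`, the set `(g ∘ f ∘ γ) '' K` is Lebesgue-null. -/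
theorem curveFlat_iff_real_images_null {M N : Type*} [MetricSpace M] [MetricSpace N]
    (f : M → N) (Lf : NNReal) (hf : LipschitzWith Lf f) :
    CurveFlat f ↔ ∀ (K : Set ℝ), IsCompact K → ∀ (γ : ℝ → M) (C : NNReal),
      LipschitzOnWith C γ K → ∀ (g : N → ℝ) (Cg : NNReal), LipschitzWith Cg g →
        volume ((g ∘ f ∘ γ) '' K) = 0 := by
  constructor
  · intro hflat K hK γ C hγ g Cg hg
    have hh := hg.comp_lipschitzOnWith (hf.comp_lipschitzOnWith hγ)
    refine hh.volume_image_eq_zero_of_ae_hasDerivWithinAt_zero hK.measurableSet ?_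
    filter_upwards [hflat K hK γ C hγ] with x hx
    exact hg.hasDerivWithinAt_comp_zero_of_tendsto_dist_div (F := f ∘ γ) hx
  · intro himg K hK γ C hγ
    exact (hf.comp_lipschitzOnWith hγ).ae_tendsto_dist_div_of_volume_image_dist_eq_zero
      hK.measurableSet fun z => himg K hK γ C hγ _ 1 (LipschitzWith.dist_left z)
end

section
/- Let M be a compact metric space with base point 0, f : M → N a base-point-preserving Lipschitz map into a purely 1-unrectifiable metric space P = N. Then f factors through the quotient M_lip: there exists a Lipschitz map g : M_lip → P with Lipschitz constant at most ‖f‖_L such that f = g ∘ π, where π : M → M_lip is the canonical quotient map. -/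
open MeasureTheory Filter Set Topology

/-- `h` is uniformly locally flat: `|h x - h y| / d(x,y) → 0` as `d(x,y) → 0`. -/
def UnifLocFlat {M : Type*} [MetricSpace M] (h : M → ℝ) : Prop :=
  ∀ ε > (0:ℝ), ∃ θ > (0:ℝ), ∀ x y : M, dist x y ≤ θ → |h x - h y| ≤ ε * dist x y

/-- The pseudometric `d_lip(x,y) = sup {|h x - h y| : h ∈ lip₀(M), ‖h‖_L ≤ 1}`. -/
noncomputable def dlip {M : Type*} [MetricSpace M] (base : M) (x y : M) : ℝ :=
  sSup {r : ℝ | ∃ h : M → ℝ, LipschitzWith 1 h ∧ h base = 0 ∧ UnifLocFlat h ∧ r = |h x - h y|}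

/-!
Every `φ ∈ lip₀(P)` with `‖φ‖_L ≤ 1` pulls back along `f` to `φ ∘ f ∈ lip₀(M)` with
`‖φ ∘ f‖_L ≤ L`, so `φ (f x) - φ (f y) ≤ L · d_lip(x, y)`. Taking the supremum over `φ`,
Theorem A turns the left side into `d(f x, f y)`; hence `f` is `L`-Lipschitz for `d_lip`
and descends to the metric quotient.
-/

namespace UnifLocFlat

variable {M N : Type*} [MetricSpace M] [MetricSpace N]

theorem comp_lipschitzWith {φ : N → ℝ} (hφ : UnifLocFlat φ) {f : M → N} {L : NNReal}
    (hf : LipschitzWith L f) : UnifLocFlat (φ ∘ f) := by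
  intro ε hε
  have hL : (0 : ℝ) < L + 1 := by positivity
  obtain ⟨θ, hθ, hφθ⟩ := hφ (ε / (L + 1)) (by positivity)
  refine ⟨θ / (L + 1), by positivity, fun x y hxy => ?_⟩
  have hfxy : dist (f x) (f y) ≤ (L + 1) * dist x y :=
    (hf.dist_le_mul x y).trans (by nlinarith [dist_nonneg (x := x) (y := y)])
  calc |φ (f x) - φ (f y)| ≤ ε / (L + 1) * dist (f x) (f y) :=
        hφθ _ _ (hfxy.trans (by rwa [le_div_iff₀' hL] at hxy))
    _ ≤ ε / (L + 1) * ((L + 1) * dist x y) := by gcongr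
    _ = ε * dist x y := by field_simp

theorem const_mul {h : M → ℝ} (hh : UnifLocFlat h) (c : ℝ) :
    UnifLocFlat (fun x => c * h x) := by
  intro ε hε
  have hc : (0 : ℝ) < |c| + 1 := by positivity
  obtain ⟨θ, hθ, hhθ⟩ := hh (ε / (|c| + 1)) (by positivity)
  refine ⟨θ, hθ, fun x y hxy => ?_⟩
  calc |c * h x - c * h y| = |c| * |h x - h y| := by rw [← mul_sub, abs_mul]
    _ ≤ (|c| + 1) * (ε / (|c| + 1) * dist x y) := by
        gcongr
        · linarith
        · exact hhθ x y hxy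
    _ = ε * dist x y := by field_simp

end UnifLocFlat

section Dlip

variable {M : Type*} [MetricSpace M] {base : M}

theorem dlip_bddAbove (base x y : M) :
    BddAbove {r : ℝ | ∃ h : M → ℝ, LipschitzWith 1 h ∧ h base = 0 ∧ UnifLocFlat h ∧
      r = |h x - h y|} := by
  refine ⟨dist x y, ?_⟩
  rintro r ⟨h, hh, -, -, rfl⟩
  simpa [Real.dist_eq] using hh.dist_le_mul x y

theorem dlip_nonneg (base x y : M) : 0 ≤ dlip base x y :=
  Real.sSup_nonneg (by rintro r ⟨h, -, -, -, rfl⟩; exact abs_nonneg _)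

theorem abs_sub_le_mul_dlip {h : M → ℝ} {K : NNReal} (hK : LipschitzWith K h)
    (h0 : h base = 0) (hflat : UnifLocFlat h) (x y : M) :
    |h x - h y| ≤ K * dlip base x y := by
  rcases eq_or_ne K 0 with rfl | hK0
  · have : h x = h y := dist_le_zero.mp (by simpa using hK.dist_le_mul x y)
    simp [this]
  have hKpos : (0 : ℝ) < K := by positivity
  have hscaled : LipschitzWith 1 (fun m => (K : ℝ)⁻¹ * h m) := by
    refine LipschitzWith.of_dist_le_mul fun a b => ?_
    rw [Real.dist_eq, ← mul_sub, abs_mul, abs_inv, abs_of_pos hKpos, ← Real.dist_eq,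
      NNReal.coe_one, one_mul, inv_mul_le_iff₀ hKpos]
    exact hK.dist_le_mul a b
  have hmem : |(K : ℝ)⁻¹ * h x - (K : ℝ)⁻¹ * h y| ≤ dlip base x y :=
    le_csSup (dlip_bddAbove base x y) ⟨_, hscaled, by simp [h0], hflat.const_mul _, rfl⟩
  calc |h x - h y| = K * |(K : ℝ)⁻¹ * h x - (K : ℝ)⁻¹ * h y| := by
        rw [← mul_sub, abs_mul, abs_inv, abs_of_pos hKpos, mul_inv_cancel_left₀ hKpos.ne']
    _ ≤ K * dlip base x y := by gcongr

end Dlip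

theorem dist_le_mul_dlip_of_dist_eq_sSup {M P : Type*} [MetricSpace M] [MetricSpace P]
    {baseM : M} {baseP : P}
    (thmA : ∀ p q : P, dist p q =
      sSup {r : ℝ | ∃ φ : P → ℝ, LipschitzWith 1 φ ∧ φ baseP = 0 ∧ UnifLocFlat φ ∧
        r = φ p - φ q})
    {f : M → P} {L : NNReal} (hf : LipschitzWith L f) (hf0 : f baseM = baseP) (x y : M) :
    dist (f x) (f y) ≤ L * dlip baseM x y := by
  rw [thmA]
  refine Real.sSup_le ?_ (mul_nonneg L.coe_nonneg (dlip_nonneg baseM x y))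
  rintro r ⟨φ, hφ, hφ0, hφflat, rfl⟩
  have hφf : LipschitzWith L (φ ∘ f) := by simpa using hφ.comp hf
  exact (le_abs_self _).trans <| abs_sub_le_mul_dlip (h := φ ∘ f) hφf
    (by simp [hf0, hφ0]) (hφflat.comp_lipschitzWith hf) x y

theorem exists_lipschitzWith_comp_eq_of_dist_le {M P Q : Type*} [PseudoMetricSpace M]
    [MetricSpace P] [PseudoMetricSpace Q] {π : M → Q} (hπ : Function.Surjective π)
    {f : M → P} {L : NNReal} (hfπ : ∀ x y, dist (f x) (f y) ≤ L * dist (π x) (π y)) :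
    ∃ g : Q → P, LipschitzWith L g ∧ f = g ∘ π := by
  refine ⟨f ∘ Function.surjInv hπ, LipschitzWith.of_dist_le_mul fun a b => ?_, funext fun x => ?_⟩
  · simpa only [Function.comp, Function.surjInv_eq hπ] using hfπ (Function.surjInv hπ a)
      (Function.surjInv hπ b)
  · have := hfπ (Function.surjInv hπ (π x)) x
    rw [Function.surjInv_eq hπ, dist_self, mul_zero] at this
    exact (dist_le_zero.mp this).symm

theorem factors_through_Mlip_of_p1u_target_general {M P Q : Type*}
    [MetricSpace M] [MetricSpace P] [MetricSpace Q]
    (baseM : M) (baseP : P)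
    (f : M → P) (L : NNReal) (hf : LipschitzWith L f) (hf0 : f baseM = baseP)
    (thmA : ∀ p q : P, dist p q =
      sSup {r : ℝ | ∃ φ : P → ℝ, LipschitzWith 1 φ ∧ φ baseP = 0 ∧ UnifLocFlat φ ∧
        r = φ p - φ q})
    (π : M → Q) (hsurj : Function.Surjective π)
    (hquot : ∀ x y : M, dist (π x) (π y) = dlip baseM x y) :
    ∃ g : Q → P, LipschitzWith L g ∧ f = g ∘ π :=
  exists_lipschitzWith_comp_eq_of_dist_le hsurj fun x y => by
    rw [hquot]
    exact dist_le_mul_dlip_of_dist_eq_sSup thmA hf hf0 x y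

/-- Let `M` be a compact pointed metric space with metric quotient `(Q, π)` for the
pseudometric `d_lip`, and `f : M → P` a base-point-preserving Lipschitz map into a
purely 1-unrectifiable space `P` (satisfying the distance formula of Theorem A of
[AGPP]). Then `f` factors through `π` via a Lipschitz map of constant at most that
of `f`. -/
theorem factors_through_Mlip_of_p1u_target {M P Q : Type*}
    [MetricSpace M] [CompactSpace M] [MetricSpace P] [MetricSpace Q]
    (baseM : M) (baseP : P)
    (hP : PurelyOneUnrectifiable P)
    (f : M → P) (L : NNReal) (hf : LipschitzWith L f) (hf0 : f baseM = baseP)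
    (thmA : ∀ p q : P, dist p q =
      sSup {r : ℝ | ∃ φ : P → ℝ, LipschitzWith 1 φ ∧ φ baseP = 0 ∧ UnifLocFlat φ ∧
        r = φ p - φ q})
    (π : M → Q) (hsurj : Function.Surjective π)
    (hquot : ∀ x y : M, dist (π x) (π y) = dlip baseM x y) :
    ∃ g : Q → P, LipschitzWith L g ∧ f = g ∘ π :=
  factors_through_Mlip_of_p1u_target_general baseM baseP f L hf hf0 thmA π hsurj hquot
end
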